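/- Any stationary point P_{T|X} of the Lagrangian L(P_{T|X}, {λ_x}) = F(P_{T|X}, Q_A, Q_{T,Y}) + Σ_x λ_x ( Σ_t P_{T|X}(t|x) − 1 ) (for fixed Q_A, Q_{T,Y} with strictly positive entries) satisfies P_{T|X}(t|x) = 2^{μ_x} α_{t,x} / Π_y [ Σ_{x̃} P_X(x̃) P_{A|X}(a(t)|x̃) P_{Y|X,A}(y|x̃,a(t)) ]^{P_{Y|X,A}(y|x,a(t))}, where μ_x is an affine function of λ_x and P_{A|X}(a|x) = Σ_{t : a(t)=a} P_{T|X}(t|x); consequently P_{T|X}(t|x) = (α_{t,x} / α_{a(t),x}) P_{A|X}(a(t)|x), so the stationary point is completely determined by the |𝒜||𝒳| values P_{A|X}(a|x), which satisfy the nonlinear system P_{A|X}(a|x) = 2^{μ_x} α_{a,x} / Π_y [ Σ_{x̃} P_X(x̃) P_{Y|X,A}(y|x̃,a) P_{A|X}(a|x̃) ]^{P_{Y|X,A}(y|x,a)}. -/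

import Mathlib

open Finset

noncomputable section

/-- A probability mass function on a finite alphabet. -/
def IsPMF {α : Type} [Fintype α] (p : α → ℝ) : Prop :=
  (∀ a, 0 ≤ p a) ∧ ∑ a, p a = 1

/-- A conditional probability mass function. -/
def IsCondPMF {α β : Type} [Fintype α] [Fintype β] (p : α → β → ℝ) : Prop :=
  ∀ a, IsPMF (p a)

/-- A Shannon strategy: an estimate function `Y → Xh` together with an action in `A`. -/
abbrev Strat (Y Xh A : Type) : Type := (Y → Xh) × A

variable {X Y A Xh : Type} [Fintype X] [Fintype Y] [Fintype A] [Fintype Xh]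
  [DecidableEq X] [DecidableEq Y] [DecidableEq A] [DecidableEq Xh]


/-- Joint pmf `P_{X,Y,T}(x,y,t) = P_X(x) P_{T|X}(t|x) P_{Y|X,A}(y|x,a(t))`. -/
def pXYT (PX : X → ℝ) (PW : A → X → Y → ℝ) (PT : X → Strat Y Xh A → ℝ)
    (x : X) (y : Y) (t : Strat Y Xh A) : ℝ :=
  PX x * PT x t * PW t.2 x y

/-- Action marginal `P_A`. -/
def pA (PX : X → ℝ) (PT : X → Strat Y Xh A → ℝ) (a : A) : ℝ :=
  ∑ x, ∑ t, if t.2 = a then PX x * PT x t else 0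

/-- Marginal `P_{X,A}`. -/
def pXA (PX : X → ℝ) (PT : X → Strat Y Xh A → ℝ) (x : X) (a : A) : ℝ :=
  ∑ t, if t.2 = a then PX x * PT x t else 0

/-- Marginal `P_{Y,A}`. -/
def pYA (PX : X → ℝ) (PW : A → X → Y → ℝ) (PT : X → Strat Y Xh A → ℝ)
    (y : Y) (a : A) : ℝ :=
  ∑ x, ∑ t, if t.2 = a then pXYT PX PW PT x y t else 0

/-- Marginal `P_{X,Y,A}`. -/
def pXYA (PX : X → ℝ) (PW : A → X → Y → ℝ) (PT : X → Strat Y Xh A → ℝ)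
    (x : X) (y : Y) (a : A) : ℝ :=
  ∑ t, if t.2 = a then pXYT PX PW PT x y t else 0

/-- Marginal `P_{Y,T}`. -/
def pYT (PX : X → ℝ) (PW : A → X → Y → ℝ) (PT : X → Strat Y Xh A → ℝ)
    (y : Y) (t : Strat Y Xh A) : ℝ :=
  ∑ x, pXYT PX PW PT x y t

/-- Mutual information `I(X; a(T))` (base-2 logarithms). -/
def IXA (PX : X → ℝ) (PT : X → Strat Y Xh A → ℝ) : ℝ :=
  ∑ x, ∑ a, pXA PX PT x a * Real.logb 2 (pXA PX PT x a / (PX x * pA PX PT a))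

/-- Conditional mutual information `I(X; T | Y, a(T))` (base-2 logarithms). -/
def IXTcondYA (PX : X → ℝ) (PW : A → X → Y → ℝ) (PT : X → Strat Y Xh A → ℝ) : ℝ :=
  ∑ x, ∑ y, ∑ t, pXYT PX PW PT x y t *
    Real.logb 2 (pXYT PX PW PT x y t * pYA PX PW PT y t.2 /
      (pXYA PX PW PT x y t.2 * pYT PX PW PT y t))

/-- Average distortion `E[d(X, T(Y))]`. -/
def expDist (PX : X → ℝ) (PW : A → X → Y → ℝ) (dist : X → Xh → ℝ)
    (PT : X → Strat Y Xh A → ℝ) : ℝ :=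
  ∑ x, ∑ y, ∑ t, pXYT PX PW PT x y t * dist x (t.1 y)

/-- Average action cost `E[Δ(a(T))]`. -/
def expCost (PX : X → ℝ) (cost : A → ℝ) (PT : X → Strat Y Xh A → ℝ) : ℝ :=
  ∑ x, ∑ t, PX x * PT x t * cost t.2

/-- The rate-distortion-cost function in the Shannon-strategy formulation. -/
def RDC (PX : X → ℝ) (PW : A → X → Y → ℝ) (dist : X → Xh → ℝ) (cost : A → ℝ)
    (D C : ℝ) : ℝ :=
  sInf { r : ℝ | ∃ PT : X → Strat Y Xh A → ℝ, IsCondPMF PT ∧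
    expDist PX PW dist PT ≤ D ∧ expCost PX cost PT ≤ C ∧
    r = IXA PX PT + IXTcondYA PX PW PT }
/-- Conditional joint pmf `P_{Y,T|X}(y,t|x) = P_{T|X}(t|x) P_{Y|X,A}(y|x,a(t))`. -/
def pYTgivenX (PW : A → X → Y → ℝ) (PT : X → Strat Y Xh A → ℝ)
    (x : X) (y : Y) (t : Strat Y Xh A) : ℝ :=
  PT x t * PW t.2 x y

/-- The (real-valued) Blahut–Arimoto functional `F(P_{T|X}, Q_{T,Y}, Q_A)`
(base-2 logarithms). -/
def FfunR (PX : X → ℝ) (PW : A → X → Y → ℝ) (dist : X → Xh → ℝ) (cost : A → ℝ)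
    (s m : ℝ) (PT : X → Strat Y Xh A → ℝ) (QTY : Strat Y Xh A × Y → ℝ)
    (QA : A → ℝ) : ℝ :=
  (∑ y, ∑ a, pYA PX PW PT y a * Real.logb 2 (pYA PX PW PT y a / QA a))
  - (∑ x, ∑ y, ∑ t, pXYT PX PW PT x y t * Real.logb 2 (PW t.2 x y))
  + (∑ x, PX x * ∑ t, ∑ y, pYTgivenX PW PT x y t *
      Real.logb 2 (pYTgivenX PW PT x y t / QTY (t, y)))
  - s * expDist PX PW dist PT - m * expCost PX cost PT

/-- The Lagrangian `L(P_{T|X}, {λ_x}) = F + Σ_x λ_x (Σ_t P_{T|X}(t|x) − 1)`. -/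
def Lagr (PX : X → ℝ) (PW : A → X → Y → ℝ) (dist : X → Xh → ℝ) (cost : A → ℝ)
    (s m : ℝ) (QTY : Strat Y Xh A × Y → ℝ) (QA : A → ℝ) (lam : X → ℝ)
    (PT : X → Strat Y Xh A → ℝ) : ℝ :=
  FfunR PX PW dist cost s m PT QTY QA + ∑ x, lam x * ((∑ t, PT x t) - 1)

/-- The constant `α_{t,x} = Q_A(a(t)) 2^{m Δ(a(t))} 2^{Σ_y P(y|x,a(t)) [s d(t(y),x) + log₂ Q_{T,Y}(t,y)]}`. -/
def alphaT (PW : A → X → Y → ℝ) (dist : X → Xh → ℝ) (cost : A → ℝ) (s m : ℝ)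
    (QTY : Strat Y Xh A × Y → ℝ) (QA : A → ℝ) (t : Strat Y Xh A) (x : X) : ℝ :=
  QA t.2 * (2 : ℝ) ^ (m * cost t.2) *
    (2 : ℝ) ^ (∑ y, PW t.2 x y * (s * dist x (t.1 y) + Real.logb 2 (QTY (t, y))))

/-- The constant `α_{a,x} = Σ_{t : a(t)=a} α_{t,x}`. -/
def alphaA (PW : A → X → Y → ℝ) (dist : X → Xh → ℝ) (cost : A → ℝ) (s m : ℝ)
    (QTY : Strat Y Xh A × Y → ℝ) (QA : A → ℝ) (a : A) (x : X) : ℝ :=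
  ∑ t, if t.2 = a then alphaT PW dist cost s m QTY QA t x else 0

/-- The induced conditional action pmf `P_{A|X}(a|x) = Σ_{t : a(t)=a} P_{T|X}(t|x)`. -/
def pAgivenX (PT : X → Strat Y Xh A → ℝ) (a : A) (x : X) : ℝ :=
  ∑ t, if t.2 = a then PT x t else 0

/-!
Fix an entry `(x, t)` and let only `u = P_{T|X}(t|x)` vary. Up to a constant, the Lagrangian is
then a sum of terms `z log (z / q)` with `z` affine in `u` (coming from `P_{Y,A}` and from
`P_{Y,T|X}`) plus a linear function of `u`. At `u = 0` the terms coming from `P_{Y,T|X}` have the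
singular part `(P_X(x) / log 2) · u log u`, which the others can only increase, and `u log u` is
not differentiable at `0` (`HasDerivAt` is two-sided, and Lean's `log` is `log |u|` for `u < 0`);
so stationarity forces every entry to be positive. At a positive entry the vanishing derivative is
affine in `log P_{T|X}(t|x)`; exponentiating gives the Gibbs form
`P_{T|X}(t|x) = 2^{μ_x} α_{t,x} / ∏_y P_{Y,A}(y,a(t))^{P(y|x,a(t))}`, `μ_x = -2/log 2 - λ_x/P_X(x)`,
and summing it over the `t` with `a(t) = a` gives the equation for `P_{A|X}` and the ratio form.
-/

open Real

lemma hasDerivAt_mul_logb_div {f : ℝ → ℝ} {f' q u₀ : ℝ} (hf : HasDerivAt f f' u₀)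
    (hf₀ : 0 < f u₀) (hq : 0 < q) :
    HasDerivAt (fun u => f u * logb 2 (f u / q)) (f' * (logb 2 (f u₀ / q) + 1 / log 2)) u₀ := by
  have hlog := ((hf.div_const q).log (div_pos hf₀ hq).ne').div_const (log 2)
  refine (hf.mul hlog).congr_deriv ?_
  simp only [logb]
  field_simp

lemma mul_mul_logb_div (u k q : ℝ) (hq : 0 < q) :
    u * k * logb 2 (u * k / q) = k / log 2 * (u * log u) + k * logb 2 (k / q) * u := by
  rcases eq_or_ne k 0 with rfl | hk
  · simp
  rcases eq_or_ne u 0 with rfl | hu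
  · simp
  rw [mul_div_assoc, logb_mul hu (div_ne_zero hk hq.ne'), logb]
  ring

lemma differentiableAt_add_mul_mul_logb_div_sub {c k q : ℝ} (hc : 0 ≤ c) (hq : 0 < q) :
    DifferentiableAt ℝ (fun u => (c + k * u) * logb 2 ((c + k * u) / q)
      - (if c = 0 then k / log 2 else 0) * (u * log u)) 0 := by
  rcases hc.eq_or_lt with rfl | hc
  · simp_rw [zero_add, if_pos, mul_comm k, mul_mul_logb_div _ _ _ hq, add_sub_cancel_left]
    fun_prop
  · have hf : HasDerivAt (fun u => c + k * u) k 0 := by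
      simpa using ((hasDerivAt_id (0 : ℝ)).const_mul k).const_add c
    simpa [hc.ne'] using
      (hasDerivAt_mul_logb_div hf (by simpa using hc) hq).differentiableAt

lemma differentiableAt_sum_add_mul_mul_logb_div_sub {ι : Type*} [Fintype ι] {c k q : ι → ℝ}
    (hc : ∀ i, 0 ≤ c i) (hq : ∀ i, 0 < q i) :
    DifferentiableAt ℝ (fun u => ∑ i, (c i + k i * u) * logb 2 ((c i + k i * u) / q i)
      - (∑ i, if c i = 0 then k i / log 2 else 0) * (u * log u)) 0 := by
  simp only [Finset.sum_mul, ← Finset.sum_sub_distrib]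
  exact DifferentiableAt.fun_sum fun i _ => differentiableAt_add_mul_mul_logb_div_sub (hc i) (hq i)

lemma eq_zero_of_differentiableAt_sub_mul_mul_log {f : ℝ → ℝ} {a : ℝ}
    (hf : DifferentiableAt ℝ f 0) (h : DifferentiableAt ℝ (fun u => f u - a * (u * log u)) 0) :
    a = 0 := by
  by_contra ha
  apply not_DifferentiableAt_log_mul_zero
  have heq : (fun u : ℝ => u * log u) = fun u => a⁻¹ * (f u - (f u - a * (u * log u))) := by
    funext u
    field_simp
    ring
  rw [heq]
  exact (hf.sub h).const_mul a⁻¹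

lemma rpow_sum_mul_logb {ι : Type*} [Fintype ι] {b : ℝ} (hb : 0 < b) (hb₁ : b ≠ 1)
    (w P : ι → ℝ) (hP : ∀ i, w i ≠ 0 → 0 < P i) :
    b ^ (∑ i, w i * logb b (P i)) = ∏ i, P i ^ w i := by
  rw [rpow_sum_of_pos hb]
  refine Finset.prod_congr rfl fun i _ => ?_
  rcases eq_or_ne (w i) 0 with hw | hw
  · simp [hw]
  · rw [mul_comm, rpow_mul hb.le, rpow_logb hb hb₁ (hP i hw)]

lemma Fintype.sum_apply_ite_eq {ι γ M : Type*} [Fintype ι] [DecidableEq ι] [AddCommGroup M]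
    (f : ι → γ) (g : ι → γ → M) (i₀ : ι) (v : γ) :
    ∑ i, g i (if i = i₀ then v else f i) = ∑ i, g i (f i) + (g i₀ v - g i₀ (f i₀)) := by
  have h : ∀ i, g i (if i = i₀ then v else f i)
      = g i (f i) + if i = i₀ then g i₀ v - g i₀ (f i₀) else 0 := by
    intro i
    split_ifs with hi
    · subst hi; abel
    · simp
  simp [h, Finset.sum_add_distrib]

lemma Fintype.sum_sum_apply_ite_and_eq {α β γ M : Type*} [Fintype α] [Fintype β] [DecidableEq α]
    [DecidableEq β] [AddCommGroup M] (f : α → β → γ) (g : α → β → γ → M) (a₀ : α) (b₀ : β) (v : γ) :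
    ∑ a, ∑ b, g a b (if a = a₀ ∧ b = b₀ then v else f a b)
      = ∑ a, ∑ b, g a b (f a b) + (g a₀ b₀ v - g a₀ b₀ (f a₀ b₀)) := by
  have := Fintype.sum_apply_ite_eq (fun p : α × β => f p.1 p.2) (fun p => g p.1 p.2) (a₀, b₀) v
  simp only [Prod.ext_iff] at this
  rwa [Fintype.sum_prod_type, Fintype.sum_prod_type] at this

lemma Fintype.sum_ite_eq_mul_sum_of_forall {ι κ : Type*} [Fintype ι] [DecidableEq κ]
    {p w : ι → ℝ} {f : ι → κ} {c : κ → ℝ} (h : ∀ i, p i = c (f i) * w i) (k : κ) :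
    (∑ i, if f i = k then p i else 0) = c k * ∑ i, if f i = k then w i else 0 := by
  rw [Finset.mul_sum]
  refine Finset.sum_congr rfl fun i _ => ?_
  split_ifs with hi
  · rw [h, hi]
  · rw [mul_zero]

def updateEntry {α β γ : Type*} [DecidableEq α] [DecidableEq β] (P : α → β → γ) (a : α) (b : β)
    (v : γ) : α → β → γ :=
  fun a' b' => if a' = a ∧ b' = b then v else P a' b'

section Marginals

variable {X Y A Xh : Type} [Fintype X] [Fintype Y] [Fintype A] [Fintype Xh]
  [DecidableEq Y] [DecidableEq A]
  (PX : X → ℝ) (PW : A → X → Y → ℝ) (PT : X → Strat Y Xh A → ℝ)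

lemma pYA_eq_sum (y : Y) (a : A) :
    pYA PX PW PT y a = ∑ x, PX x * pAgivenX PT a x * PW a x y := by
  simp only [pYA, pAgivenX, pXYT, Finset.mul_sum, Finset.sum_mul, mul_ite, ite_mul, mul_zero,
    zero_mul]
  refine Finset.sum_congr rfl fun x _ => Finset.sum_congr rfl fun t _ => ?_
  split_ifs with ht
  · rw [ht]
  · rfl

variable {PX PW PT}

lemma pXYT_le_pYA (hPX : ∀ x, 0 ≤ PX x) (hPW : ∀ a x y, 0 ≤ PW a x y) (hPT : ∀ x t, 0 ≤ PT x t)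
    (x : X) (y : Y) (t : Strat Y Xh A) : pXYT PX PW PT x y t ≤ pYA PX PW PT y t.2 := by
  have hnn : ∀ x' t', 0 ≤ if t'.2 = t.2 then pXYT PX PW PT x' y t' else 0 := fun x' t' => by
    split_ifs
    exacts [mul_nonneg (mul_nonneg (hPX _) (hPT _ _)) (hPW _ _ _), le_rfl]
  calc pXYT PX PW PT x y t = if t.2 = t.2 then pXYT PX PW PT x y t else 0 := (if_pos rfl).symm
    _ ≤ ∑ t', if t'.2 = t.2 then pXYT PX PW PT x y t' else 0 :=
      Finset.single_le_sum (fun t' _ => hnn x t') (Finset.mem_univ t)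
    _ ≤ pYA PX PW PT y t.2 :=
      Finset.single_le_sum (f := fun x' => ∑ t', if t'.2 = t.2 then pXYT PX PW PT x' y t' else 0)
        (fun x' _ => Finset.sum_nonneg fun t' _ => hnn x' t') (Finset.mem_univ x)

lemma pYA_nonneg (hPX : ∀ x, 0 ≤ PX x) (hPW : ∀ a x y, 0 ≤ PW a x y) (hPT : ∀ x t, 0 ≤ PT x t)
    (y : Y) (a : A) : 0 ≤ pYA PX PW PT y a :=
  Finset.sum_nonneg fun x _ => Finset.sum_nonneg fun t _ => by
    split_ifs
    exacts [mul_nonneg (mul_nonneg (hPX _) (hPT _ _)) (hPW _ _ _), le_rfl]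

lemma pYA_pos (hPX : ∀ x, 0 < PX x) (hPW : ∀ a x y, 0 ≤ PW a x y) (hPT : ∀ x t, 0 ≤ PT x t)
    {x : X} {t : Strat Y Xh A} (ht : 0 < PT x t) {y : Y} (hy : PW t.2 x y ≠ 0) :
    0 < pYA PX PW PT y t.2 :=
  (mul_pos (mul_pos (hPX x) ht) ((hPW _ _ _).lt_of_ne' hy)).trans_le
    (pXYT_le_pYA (fun x => (hPX x).le) hPW hPT x y t)

end Marginals

section Alpha

variable {X Y A Xh : Type} [Fintype Y] (PW : A → X → Y → ℝ) (dist : X → Xh → ℝ) (cost : A → ℝ)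
  (s m : ℝ) (QTY : Strat Y Xh A × Y → ℝ) {QA : A → ℝ}

lemma alphaT_pos (hQA : ∀ a, 0 < QA a) (t : Strat Y Xh A) (x : X) :
    0 < alphaT PW dist cost s m QTY QA t x := by
  unfold alphaT
  have := hQA t.2
  positivity

lemma alphaA_pos [Fintype A] [Fintype Xh] [DecidableEq Y] [DecidableEq A] (hQA : ∀ a, 0 < QA a)
    (t : Strat Y Xh A) (x : X) : 0 < alphaA PW dist cost s m QTY QA t.2 x :=
  Finset.sum_pos'
    (fun t' _ => by split_ifs; exacts [(alphaT_pos PW dist cost s m QTY hQA t' x).le, le_rfl])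
    ⟨t, Finset.mem_univ t, by simpa using alphaT_pos PW dist cost s m QTY hQA t x⟩

lemma logb_alphaT (hQA : ∀ a, 0 < QA a) (t : Strat Y Xh A) (x : X) :
    logb 2 (alphaT PW dist cost s m QTY QA t x) = logb 2 (QA t.2) + m * cost t.2
      + s * ∑ y, PW t.2 x y * dist x (t.1 y) + ∑ y, PW t.2 x y * logb 2 (QTY (t, y)) := by
  have := hQA t.2
  rw [alphaT, logb_mul (by positivity) (by positivity), logb_mul (by positivity) (by positivity),
    logb_rpow two_pos (by norm_num), logb_rpow two_pos (by norm_num)]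
  simp only [mul_add, Finset.sum_add_distrib, Finset.mul_sum, mul_left_comm s]
  ring

end Alpha

section Perturbation

variable {X Y A Xh : Type} [Fintype X] [Fintype Y] [Fintype A] [Fintype Xh]
  [DecidableEq X] [DecidableEq Y] [DecidableEq A] [DecidableEq Xh]
  {PX : X → ℝ} {PW : A → X → Y → ℝ} {PT : X → Strat Y Xh A → ℝ} (x : X) (t : Strat Y Xh A) (u : ℝ)

lemma pYA_updateEntry (y : Y) (a : A) :
    pYA PX PW (updateEntry PT x t u) y a = if a = t.2
      then pYA PX PW PT y t.2 + PX x * PW t.2 x y * (u - PT x t) else pYA PX PW PT y a := by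
  have h := Fintype.sum_sum_apply_ite_and_eq PT
    (fun x' t' v => if t'.2 = a then PX x' * v * PW t'.2 x' y else 0) x t u
  simp only [pYA, pXYT, updateEntry] at h ⊢
  rw [h]
  by_cases ha : a = t.2
  · subst ha
    simp only [if_true]
    ring
  · simp [ha, Ne.symm ha]

lemma sum_sum_pYA_mul_logb_updateEntry (QA : A → ℝ) :
    ∑ y, ∑ a, pYA PX PW (updateEntry PT x t u) y a
        * logb 2 (pYA PX PW (updateEntry PT x t u) y a / QA a)
      = ∑ y, ∑ a, pYA PX PW PT y a * logb 2 (pYA PX PW PT y a / QA a)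
        + (∑ y, (pYA PX PW PT y t.2 + PX x * PW t.2 x y * (u - PT x t))
            * logb 2 ((pYA PX PW PT y t.2 + PX x * PW t.2 x y * (u - PT x t)) / QA t.2)
          - ∑ y, pYA PX PW PT y t.2 * logb 2 (pYA PX PW PT y t.2 / QA t.2)) := by
  simp only [pYA_updateEntry, Fintype.sum_apply_ite_eq (pYA PX PW PT _)
    (fun a v => v * logb 2 (v / QA a)), Finset.sum_add_distrib, Finset.sum_sub_distrib]

lemma sum_sum_sum_pXYT_mul_updateEntry (c : X → Y → Strat Y Xh A → ℝ) :
    ∑ x', ∑ y, ∑ t', pXYT PX PW (updateEntry PT x t u) x' y t' * c x' y t'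
      = ∑ x', ∑ y, ∑ t', pXYT PX PW PT x' y t' * c x' y t'
        + (u - PT x t) * (PX x * ∑ y, PW t.2 x y * c x y t) := by
  simp only [Finset.sum_comm (γ := Y)]
  have h := Fintype.sum_sum_apply_ite_and_eq PT
    (fun x' t' v => ∑ y, PX x' * v * PW t'.2 x' y * c x' y t') x t u
  simp only [pXYT, updateEntry] at h ⊢
  rw [h, ← Finset.sum_sub_distrib, Finset.mul_sum, Finset.mul_sum]
  congr 1
  exact Finset.sum_congr rfl fun y _ => by ring

lemma expCost_updateEntry (cost : A → ℝ) :
    expCost PX cost (updateEntry PT x t u)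
      = expCost PX cost PT + (u - PT x t) * (PX x * cost t.2) := by
  have h := Fintype.sum_sum_apply_ite_and_eq PT (fun x' t' v => PX x' * v * cost t'.2) x t u
  simp only [expCost, updateEntry] at h ⊢
  rw [h]
  ring

lemma sum_mul_sum_updateEntry_sub_one (lam : X → ℝ) :
    ∑ x', lam x' * ((∑ t', updateEntry PT x t u x' t') - 1)
      = ∑ x', lam x' * ((∑ t', PT x' t') - 1) + (u - PT x t) * lam x := by
  have h := Fintype.sum_sum_apply_ite_and_eq PT (fun x' _ v => lam x' * v) x t u
  simp only [updateEntry, mul_sub, Finset.sum_sub_distrib, Finset.mul_sum] at h ⊢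
  rw [h]
  ring

lemma sum_mul_sum_sum_pYTgivenX_mul_logb_updateEntry (QTY : Strat Y Xh A × Y → ℝ) :
    ∑ x', PX x' * ∑ t', ∑ y, pYTgivenX PW (updateEntry PT x t u) x' y t'
        * logb 2 (pYTgivenX PW (updateEntry PT x t u) x' y t' / QTY (t', y))
      = ∑ x', PX x' * ∑ t', ∑ y, pYTgivenX PW PT x' y t'
          * logb 2 (pYTgivenX PW PT x' y t' / QTY (t', y))
        + PX x * (∑ y, u * PW t.2 x y * logb 2 (u * PW t.2 x y / QTY (t, y))
          - ∑ y, PT x t * PW t.2 x y * logb 2 (PT x t * PW t.2 x y / QTY (t, y))) := by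
  have h := Fintype.sum_sum_apply_ite_and_eq PT
    (fun x' t' v => PX x' * ∑ y, v * PW t'.2 x' y * logb 2 (v * PW t'.2 x' y / QTY (t', y))) x t u
  simp only [pYTgivenX, updateEntry, Finset.mul_sum] at h ⊢
  rw [h, mul_sub, Finset.mul_sum, Finset.mul_sum]

end Perturbation

section Slice

variable {X Y A Xh : Type} [Fintype X] [Fintype Y] [Fintype A] [Fintype Xh]
  [DecidableEq Y] [DecidableEq A]
  (PX : X → ℝ) (PW : A → X → Y → ℝ) (dist : X → Xh → ℝ) (cost : A → ℝ) (s m : ℝ)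
  (QTY : Strat Y Xh A × Y → ℝ) (QA : A → ℝ) (lam : X → ℝ) (PT : X → Strat Y Xh A → ℝ)

def lagrSlice (x : X) (t : Strat Y Xh A) (u : ℝ) : ℝ :=
  (∑ y, (pYA PX PW PT y t.2 + PX x * PW t.2 x y * (u - PT x t))
      * logb 2 ((pYA PX PW PT y t.2 + PX x * PW t.2 x y * (u - PT x t)) / QA t.2))
  + PX x * ∑ y, u * PW t.2 x y * logb 2 (u * PW t.2 x y / QTY (t, y))
  + (lam x - PX x * (∑ y, PW t.2 x y * logb 2 (PW t.2 x y)
      + s * ∑ y, PW t.2 x y * dist x (t.1 y) + m * cost t.2)) * u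

lemma lagr_updateEntry [DecidableEq X] [DecidableEq Xh] (x : X) (t : Strat Y Xh A) (u : ℝ) :
    Lagr PX PW dist cost s m QTY QA lam (updateEntry PT x t u)
      = Lagr PX PW dist cost s m QTY QA lam PT
        + (lagrSlice PX PW dist cost s m QTY QA lam PT x t u
          - lagrSlice PX PW dist cost s m QTY QA lam PT x t (PT x t)) := by
  simp only [Lagr, FfunR, expDist, sum_sum_pYA_mul_logb_updateEntry,
    sum_sum_sum_pXYT_mul_updateEntry, sum_mul_sum_sum_pYTgivenX_mul_logb_updateEntry,
    expCost_updateEntry, sum_mul_sum_updateEntry_sub_one, lagrSlice, sub_self, mul_zero, add_zero]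
  ring

variable {PX PW dist cost s m QTY QA lam PT}

lemma hasDerivAt_lagrSlice {x : X} {t : Strat Y Xh A} (hPT : 0 < PT x t)
    (hPW : ∀ y, 0 ≤ PW t.2 x y) (hpYA : ∀ y, PW t.2 x y ≠ 0 → 0 < pYA PX PW PT y t.2)
    (hQA : 0 < QA t.2) (hQTY : ∀ y, 0 < QTY (t, y)) :
    HasDerivAt (lagrSlice PX PW dist cost s m QTY QA lam PT x t)
      ((∑ y, PX x * PW t.2 x y * (logb 2 (pYA PX PW PT y t.2 / QA t.2) + 1 / log 2))
        + PX x * ∑ y, PW t.2 x y * (logb 2 (PT x t * PW t.2 x y / QTY (t, y)) + 1 / log 2)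
        + (lam x - PX x * (∑ y, PW t.2 x y * logb 2 (PW t.2 x y)
          + s * ∑ y, PW t.2 x y * dist x (t.1 y) + m * cost t.2))) (PT x t) := by
  have hmarg : ∀ y, HasDerivAt (fun u => (pYA PX PW PT y t.2 + PX x * PW t.2 x y * (u - PT x t))
      * logb 2 ((pYA PX PW PT y t.2 + PX x * PW t.2 x y * (u - PT x t)) / QA t.2))
      (PX x * PW t.2 x y * (logb 2 (pYA PX PW PT y t.2 / QA t.2) + 1 / log 2)) (PT x t) := by
    intro y
    rcases eq_or_ne (PW t.2 x y) 0 with h0 | h0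
    · simpa [h0] using hasDerivAt_const (PT x t) _
    have hf : HasDerivAt (fun u => pYA PX PW PT y t.2 + PX x * PW t.2 x y * (u - PT x t))
        (PX x * PW t.2 x y) (PT x t) := by
      simpa using (((hasDerivAt_id (PT x t)).sub_const (PT x t)).const_mul
        (PX x * PW t.2 x y)).const_add (pYA PX PW PT y t.2)
    simpa using hasDerivAt_mul_logb_div hf (by simpa using hpYA y h0) hQA
  have hcond : ∀ y, HasDerivAt (fun u => u * PW t.2 x y * logb 2 (u * PW t.2 x y / QTY (t, y)))
      (PW t.2 x y * (logb 2 (PT x t * PW t.2 x y / QTY (t, y)) + 1 / log 2)) (PT x t) := by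
    intro y
    rcases (hPW y).eq_or_lt with h0 | h0
    · simpa [← h0] using hasDerivAt_const (PT x t) (0 : ℝ)
    exact hasDerivAt_mul_logb_div (hasDerivAt_mul_const _) (mul_pos hPT h0) (hQTY y)
  exact ((HasDerivAt.fun_sum fun y _ => hmarg y).add
    ((HasDerivAt.fun_sum fun y _ => hcond y).const_mul (PX x))).add
    (by simpa using (hasDerivAt_id (PT x t)).const_mul _)

lemma hasDerivAt_lagrSlice_of_hasDerivAt_lagr [DecidableEq X] [DecidableEq Xh] {x : X}
    {t : Strat Y Xh A} {D : ℝ}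
    (h : HasDerivAt (fun u => Lagr PX PW dist cost s m QTY QA lam (updateEntry PT x t u)) D
      (PT x t)) :
    HasDerivAt (lagrSlice PX PW dist cost s m QTY QA lam PT x t) D (PT x t) := by
  refine ((h.sub_const (Lagr PX PW dist cost s m QTY QA lam PT)).add_const
    (lagrSlice PX PW dist cost s m QTY QA lam PT x t (PT x t))).congr_of_eventuallyEq
    (Filter.Eventually.of_forall fun u => ?_)
  dsimp only
  rw [lagr_updateEntry]
  ring

lemma entry_pos_of_differentiableAt_lagrSlice {x : X} {t : Strat Y Xh A}
    (hPX : ∀ x, 0 < PX x) (hPW : ∀ a x, IsPMF (PW a x)) (hPT : ∀ x t, 0 ≤ PT x t)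
    (hQA : 0 < QA t.2) (hQTY : ∀ y, 0 < QTY (t, y))
    (hd : DifferentiableAt ℝ (lagrSlice PX PW dist cost s m QTY QA lam PT x t) (PT x t)) :
    0 < PT x t := by
  refine (hPT x t).lt_of_ne fun h0 => ?_
  rw [← h0] at hd
  set c : Y → ℝ := fun y => pYA PX PW PT y t.2
  set k : Y → ℝ := fun y => PX x * PW t.2 x y
  obtain ⟨b, hslice⟩ : ∃ b, ∀ u, lagrSlice PX PW dist cost s m QTY QA lam PT x t u
      = (∑ y, (c y + k y * u) * logb 2 ((c y + k y * u) / QA t.2))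
        + PX x / log 2 * (u * log u) + b * u := by
    refine ⟨PX x * ∑ y, PW t.2 x y * logb 2 (PW t.2 x y / QTY (t, y))
      + (lam x - PX x * (∑ y, PW t.2 x y * logb 2 (PW t.2 x y)
        + s * ∑ y, PW t.2 x y * dist x (t.1 y) + m * cost t.2)), fun u => ?_⟩
    simp only [lagrSlice, ← h0, sub_zero, mul_mul_logb_div _ _ _ (hQTY _),
      Finset.sum_add_distrib, ← Finset.sum_mul, ← Finset.sum_div, (hPW t.2 x).2, c, k]
    ring
  have hsing : DifferentiableAt ℝ (fun u => lagrSlice PX PW dist cost s m QTY QA lam PT x t u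
      - ((∑ y, if c y = 0 then k y / log 2 else 0) + PX x / log 2) * (u * log u)) 0 := by
    refine ((differentiableAt_sum_add_mul_mul_logb_div_sub (c := c) (k := k)
      (fun y => pYA_nonneg (fun x => (hPX x).le) (fun a x => (hPW a x).1) hPT y t.2)
      (fun _ => hQA)).add (differentiableAt_id.const_mul b)).congr_of_eventuallyEq
      (Filter.Eventually.of_forall fun u => ?_)
    simp only [hslice, Pi.add_apply, id]
    ring
  have hsum : 0 ≤ ∑ y, if c y = 0 then k y / log 2 else 0 :=
    Finset.sum_nonneg fun y _ => by
      split_ifs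
      exacts [div_nonneg (mul_nonneg (hPX x).le ((hPW _ _).1 y)) (log_pos one_lt_two).le, le_rfl]
  have := eq_zero_of_differentiableAt_sub_mul_mul_log hd hsing
  have := div_pos (hPX x) (log_pos one_lt_two)
  linarith

/-- The `z log z` terms coming from `P_{Y,A}` and from `P_{Y,T|X}` each contribute `1 / log 2`
to the derivative, whence the constant `-2 / log 2`. -/
lemma logb_entry_eq_of_hasDerivAt_lagrSlice {x : X} {t : Strat Y Xh A} (hPX : 0 < PX x)
    (hPW : IsPMF (PW t.2 x)) (hPT : 0 < PT x t)
    (hpYA : ∀ y, PW t.2 x y ≠ 0 → 0 < pYA PX PW PT y t.2) (hQA : ∀ a, 0 < QA a)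
    (hQTY : ∀ y, 0 < QTY (t, y))
    (hstat : HasDerivAt (lagrSlice PX PW dist cost s m QTY QA lam PT x t) 0 (PT x t)) :
    logb 2 (PT x t) = -2 / log 2 - lam x / PX x + logb 2 (alphaT PW dist cost s m QTY QA t x)
      - ∑ y, PW t.2 x y * logb 2 (pYA PX PW PT y t.2) := by
  have hD := (hasDerivAt_lagrSlice hPT hPW.1 hpYA (hQA t.2) hQTY).unique hstat
  have hmarg : ∑ y, PX x * PW t.2 x y * (logb 2 (pYA PX PW PT y t.2 / QA t.2) + 1 / log 2)
      = PX x * (∑ y, PW t.2 x y * logb 2 (pYA PX PW PT y t.2) - logb 2 (QA t.2) + 1 / log 2) := by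
    calc _ = ∑ y, PX x * (PW t.2 x y * logb 2 (pYA PX PW PT y t.2)
          - PW t.2 x y * logb 2 (QA t.2) + PW t.2 x y * (1 / log 2)) :=
          Finset.sum_congr rfl fun y _ => by
            rcases eq_or_ne (PW t.2 x y) 0 with h0 | h0
            · simp [h0]
            · rw [logb_div (hpYA y h0).ne' (hQA t.2).ne']
              ring
      _ = _ := by
          rw [← Finset.mul_sum, Finset.sum_add_distrib, Finset.sum_sub_distrib, ← Finset.sum_mul,
            ← Finset.sum_mul, hPW.2]
          ring
  have hcond : ∑ y, PW t.2 x y * (logb 2 (PT x t * PW t.2 x y / QTY (t, y)) + 1 / log 2)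
      = logb 2 (PT x t) + ∑ y, PW t.2 x y * logb 2 (PW t.2 x y)
        - ∑ y, PW t.2 x y * logb 2 (QTY (t, y)) + 1 / log 2 := by
    calc _ = ∑ y, (PW t.2 x y * logb 2 (PT x t) + PW t.2 x y * logb 2 (PW t.2 x y)
          - PW t.2 x y * logb 2 (QTY (t, y)) + PW t.2 x y * (1 / log 2)) :=
          Finset.sum_congr rfl fun y _ => by
            rcases eq_or_ne (PW t.2 x y) 0 with h0 | h0
            · simp [h0]
            · rw [logb_div (mul_ne_zero hPT.ne' h0) (hQTY y).ne', logb_mul hPT.ne' h0]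
              ring
      _ = _ := by
          rw [Finset.sum_add_distrib, Finset.sum_sub_distrib, Finset.sum_add_distrib,
            ← Finset.sum_mul, ← Finset.sum_mul, hPW.2]
          ring
  rw [hmarg, hcond] at hD
  rw [logb_alphaT PW dist cost s m QTY hQA]
  linear_combination (norm := skip) hD / PX x
  field_simp
  ring

lemma entry_eq_of_hasDerivAt_lagrSlice {x : X} {t : Strat Y Xh A} (hPX : 0 < PX x)
    (hPW : IsPMF (PW t.2 x)) (hPT : 0 < PT x t)
    (hpYA : ∀ y, PW t.2 x y ≠ 0 → 0 < pYA PX PW PT y t.2) (hQA : ∀ a, 0 < QA a)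
    (hQTY : ∀ y, 0 < QTY (t, y))
    (hstat : HasDerivAt (lagrSlice PX PW dist cost s m QTY QA lam PT x t) 0 (PT x t)) :
    PT x t = 2 ^ (-2 / log 2 - lam x / PX x) * alphaT PW dist cost s m QTY QA t x
      / ∏ y, pYA PX PW PT y t.2 ^ PW t.2 x y := by
  rw [← rpow_sum_mul_logb two_pos (by norm_num) _ _ hpYA, ← rpow_logb two_pos (by norm_num) hPT,
    logb_entry_eq_of_hasDerivAt_lagrSlice hPX hPW hPT hpYA hQA hQTY hstat, rpow_sub two_pos,
    rpow_add two_pos, rpow_logb two_pos (by norm_num) (alphaT_pos PW dist cost s m QTY hQA t x)]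

end Slice

theorem stationary_points_of_lagrangian
    {X Y A Xh : Type} [Fintype X] [Fintype Y] [Fintype A] [Fintype Xh]
    [DecidableEq X] [DecidableEq Y] [DecidableEq A] [DecidableEq Xh]
    (PX : X → ℝ) (PW : A → X → Y → ℝ) (dist : X → Xh → ℝ) (cost : A → ℝ)
    (hPXpos : ∀ x, 0 < PX x)
    (hPW : ∀ a x, IsPMF (PW a x))
    (s m : ℝ)
    (QTY : Strat Y Xh A × Y → ℝ) (hQTYpos : ∀ p, 0 < QTY p)
    (QA : A → ℝ) (hQApos : ∀ a, 0 < QA a)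
    (lam : X → ℝ)
    (PT : X → Strat Y Xh A → ℝ) (hPT : IsCondPMF PT)
    -- stationarity: every partial derivative of the Lagrangian vanishes at `PT`
    (hstat : ∀ (x : X) (t : Strat Y Xh A),
      HasDerivAt (fun u : ℝ => Lagr PX PW dist cost s m QTY QA lam
        (fun x' t' => if x' = x ∧ t' = t then u else PT x' t')) 0 (PT x t)) :
    ∃ μ : X → ℝ,
      (∀ x, ∃ c₀ c₁ : ℝ, μ x = c₀ + c₁ * lam x) ∧
      (∀ (x : X) (t : Strat Y Xh A),
        PT x t = (2 : ℝ) ^ (μ x) * alphaT PW dist cost s m QTY QA t x /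
          ∏ y, (∑ xt, PX xt * pAgivenX PT t.2 xt * PW t.2 xt y) ^ (PW t.2 x y)) ∧
      (∀ (x : X) (t : Strat Y Xh A),
        PT x t = (alphaT PW dist cost s m QTY QA t x /
            alphaA PW dist cost s m QTY QA t.2 x) * pAgivenX PT t.2 x) ∧
      (∀ (x : X) (a : A),
        pAgivenX PT a x = (2 : ℝ) ^ (μ x) * alphaA PW dist cost s m QTY QA a x /
          ∏ y, (∑ xt, PX xt * PW a xt y * pAgivenX PT a xt) ^ (PW a x y)) := by
  have hPTnn : ∀ x t, 0 ≤ PT x t := fun x => (hPT x).1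
  have hslice : ∀ x t, HasDerivAt (lagrSlice PX PW dist cost s m QTY QA lam PT x t) 0 (PT x t) :=
    fun x t => hasDerivAt_lagrSlice_of_hasDerivAt_lagr (hstat x t)
  have hpos : ∀ x t, 0 < PT x t := fun x t => entry_pos_of_differentiableAt_lagrSlice hPXpos hPW
    hPTnn (hQApos t.2) (fun y => hQTYpos (t, y)) (hslice x t).differentiableAt
  obtain ⟨C, hC⟩ : ∃ C : X → A → ℝ, ∀ x a, C x a = 2 ^ (-2 / log 2 - lam x / PX x)
      / ∏ y, (∑ xt, PX xt * pAgivenX PT a xt * PW a xt y) ^ PW a x y := ⟨_, fun _ _ => rfl⟩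
  have hgibbs : ∀ x t, PT x t = C x t.2 * alphaT PW dist cost s m QTY QA t x := fun x t => by
    rw [entry_eq_of_hasDerivAt_lagrSlice (hPXpos x) (hPW t.2 x) (hpos x t)
      (fun y => pYA_pos hPXpos (fun a x => (hPW a x).1) hPTnn (hpos x t)) hQApos
      (fun y => hQTYpos (t, y)) (hslice x t), hC]
    simp only [pYA_eq_sum]
    ring
  have hact : ∀ x a, pAgivenX PT a x = C x a * alphaA PW dist cost s m QTY QA a x :=
    fun x => Fintype.sum_ite_eq_mul_sum_of_forall (hgibbs x)
  refine ⟨fun x => -2 / log 2 - lam x / PX x, fun x => ⟨-2 / log 2, -(PX x)⁻¹, by ring⟩,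
    fun x t => ?_, fun x t => ?_, fun x a => ?_⟩
  · rw [hgibbs x t, hC]
    ring
  · rw [hact, hgibbs x t]
    field_simp [(alphaA_pos PW dist cost s m QTY hQApos t x).ne']
  · rw [hact x a, hC]
    simp only [mul_right_comm (PX _) (PW a _ _)]
    ring
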